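/- Let G be a connected bipartite graph with bipartition (A,B) and let k ≥ 0 be an integer. Then G is k-extendable (every matching of size at most k extends to a perfect matching) if and only if |A| = |B| and for every nonempty subset X of A, either |N_G(X)| ≥ |X| + k or N_G(X) = B. -/

import Mathlib

open SimpleGraph

universe u v

variable {V : Type u} {W : Type v}

/-- `(A, B)` is a bipartition of the simple graph `G`. -/
def IsBipartition (G : SimpleGraph V) (A B : Set V) : Prop :=
  Disjoint A B ∧ A ∪ B = Set.univ ∧
    ∀ ⦃u v⦄, G.Adj u v → ((u ∈ A ∧ v ∈ B) ∨ (u ∈ B ∧ v ∈ A))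

/-- `G` is `k`-extendable: every matching with at most `k` edges extends
to a perfect matching. -/
def KExtendable (G : SimpleGraph V) (k : ℕ) : Prop :=
  ∀ M : G.Subgraph, M.IsMatching → M.edgeSet.ncard ≤ k →
    ∃ P : G.Subgraph, M ≤ P ∧ P.IsPerfectMatching

/-- A brace is a `2`-extendable bipartite graph. -/
def IsBrace (G : SimpleGraph V) : Prop :=
  (∃ A B, IsBipartition G A B) ∧ KExtendable G 2

/-- `G` has a matching whose vertex set is exactly `S`
(i.e. the subgraph of `G` induced on `S` has a perfect matching). -/
def HasPMOn (G : SimpleGraph V) (S : Set V) : Prop :=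
  ∃ M : G.Subgraph, M.IsMatching ∧ M.verts = S

/-- An orientation of a simple graph: each edge gets exactly one direction. -/
structure GraphOrientation (G : SimpleGraph V) where
  dir : V → V → Prop
  asymm : ∀ u v, dir u v → ¬ dir v u
  adj_iff : ∀ u v, G.Adj u v ↔ (dir u v ∨ dir v u)

open scoped Classical in
/-- The number of edges of the walk `w` traversed in agreement with the
orientation `o`. -/
noncomputable def forwardCount {G : SimpleGraph V} (o : GraphOrientation G) {u v : V}
    (w : G.Walk u v) : ℕ :=
  w.darts.countP fun d => decide (o.dir d.fst d.snd)

/-- `o` is a Pfaffian orientation of `G`: every central even circuit is oddly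
oriented.  (For an even circuit, being oddly oriented with respect to one
traversal direction is equivalent to being oddly oriented with respect to the
other.) -/
def IsPfaffian (G : SimpleGraph V) (o : GraphOrientation G) : Prop :=
  ∀ (v : V) (c : G.Walk v v), c.IsCycle → Even c.length →
    HasPMOn G {x | x ∉ c.support} → Odd (forwardCount o c)

/-- The neighborhood of a vertex set: vertices outside `X` adjacent to `X`. -/
def nbdSet (G : SimpleGraph V) (X : Set V) : Set V :=
  {v | v ∉ X ∧ ∃ x ∈ X, G.Adj x v}

/-- Restriction of `G` to the vertex set `T`, kept on the same vertex type. -/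
def restrictG (G : SimpleGraph V) (T : Set V) : SimpleGraph V where
  Adj x y := G.Adj x y ∧ x ∈ T ∧ y ∈ T
  symm := ⟨fun x y ⟨h, hx, hy⟩ => ⟨h.symm, hy, hx⟩⟩
  loopless := ⟨fun x ⟨h, _, _⟩ => h.ne rfl⟩

/-- Every edge of `G` is contained in a matching with vertex set exactly `S`.
(When the edges of `G` lie within `S`, this says that the graph on `S` is
1-extendable.) -/
def OneExtendableOn (G : SimpleGraph V) (S : Set V) : Prop :=
  ∀ ⦃x y⦄, G.Adj x y → ∃ M : G.Subgraph, M.IsMatching ∧ M.verts = S ∧ M.Adj x y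

/-- `G` is 1-extendable: every edge lies in a perfect matching. -/
def OneExtendable (G : SimpleGraph V) : Prop :=
  OneExtendableOn G Set.univ

/-- `G` is `k`-connected: more than `k` vertices, and deleting fewer than
`k` vertices leaves a connected graph. -/
def KConnected (G : SimpleGraph V) [Fintype V] (k : ℕ) : Prop :=
  k < Fintype.card V ∧ ∀ S : Set V, S.ncard < k → (G.induce (Sᶜ : Set V)).Connected

/-- A walk is `M`-alternating if its edges alternately belong and do not
belong to `M`. -/
def IsAltWalk {G : SimpleGraph V} (M : G.Subgraph) {u v : V} (w : G.Walk u v) : Prop :=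
  (∀ (i : ℕ) (h : i < w.edges.length), (w.edges.get ⟨i, h⟩ ∈ M.edgeSet ↔ Even i)) ∨
  (∀ (i : ℕ) (h : i < w.edges.length), (w.edges.get ⟨i, h⟩ ∈ M.edgeSet ↔ Odd i))

/-- A path is `M`-alternating if every internal vertex (vertex of degree two
in the path) is incident with an edge of `M` lying on the path. -/
def IsMAltPath {G : SimpleGraph V} (M : G.Subgraph) {a b : V} (p : G.Walk a b) : Prop :=
  p.IsPath ∧ ∀ x ∈ p.support, x ≠ a → x ≠ b → ∃ y, M.Adj x y ∧ s(x, y) ∈ p.edges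

/-- An `H`-path: a path with at least one edge, both ends in `H`, and
otherwise disjoint from `H`. -/
def IsHPath {G : SimpleGraph V} (H : G.Subgraph) {a b : V} (p : G.Walk a b) : Prop :=
  0 < p.length ∧ a ∈ H.verts ∧ b ∈ H.verts ∧
  (∀ x ∈ p.support, x ≠ a → x ≠ b → x ∉ H.verts) ∧
  ∀ e ∈ p.edges, e ∉ H.edgeSet

/-- Neighborhood of a vertex set inside a subgraph `H`. -/
def nbdSetSub {G : SimpleGraph V} (H : G.Subgraph) (X : Set V) : Set V :=
  {v | v ∉ X ∧ ∃ x ∈ X, H.Adj x v}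

/-- `M` is a perfect matching of the subgraph `H`. -/
def SubgraphPM {G₀ : SimpleGraph V} (H M : G₀.Subgraph) : Prop :=
  M ≤ H ∧ M.IsMatching ∧ M.verts = H.verts

/-- `G` is a 4-sum of the subgraphs `G₁, G₂` of `G₀` along the central
circuit `C` with vertices `a, b, c, d` (in order):
`G₁ ∪ G₂ = G₀`, `G₁ ∩ G₂ = C`, each `Gᵢ` has a vertex not in the other, and
`G` is obtained from `G₀` by deleting some (possibly no) edges of `C`. -/
def IsFourSum (G G₀ : SimpleGraph V) (G₁ G₂ : G₀.Subgraph) (a b c d : V) : Prop :=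
  ([a, b, c, d] : List V).Nodup ∧
  G₀.Adj a b ∧ G₀.Adj b c ∧ G₀.Adj c d ∧ G₀.Adj d a ∧
  HasPMOn G₀ (({a, b, c, d} : Set V)ᶜ) ∧
  G₁ ⊔ G₂ = (⊤ : G₀.Subgraph) ∧
  (G₁ ⊓ G₂).verts = ({a, b, c, d} : Set V) ∧
  (∀ x y, (G₁ ⊓ G₂).Adj x y ↔
      s(x, y) ∈ ({s(a, b), s(b, c), s(c, d), s(d, a)} : Set (Sym2 V))) ∧
  (G₁.verts \ G₂.verts).Nonempty ∧ (G₂.verts \ G₁.verts).Nonempty ∧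
  (∀ x y, G.Adj x y → G₀.Adj x y) ∧
  (∀ x y, G₀.Adj x y →
      G.Adj x y ∨ s(x, y) ∈ ({s(a, b), s(b, c), s(c, d), s(d, a)} : Set (Sym2 V)))

/-- `G` contains `H`: some even subdivision of `H` (each edge replaced by an
internally disjoint path with an odd number of edges) is isomorphic to a
central subgraph of `G`. -/
def Contains (G : SimpleGraph V) (H : SimpleGraph W) : Prop :=
  ∃ (f : W → V) (p : ∀ u v : W, H.Adj u v → G.Walk (f u) (f v)),
    Function.Injective f ∧
    (∀ u v (h : H.Adj u v), (p u v h).IsPath ∧ Odd (p u v h).length) ∧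
    (∀ u v (h : H.Adj u v), p v u h.symm = (p u v h).reverse) ∧
    (∀ u v (h : H.Adj u v) (w : W), f w ∈ (p u v h).support → w = u ∨ w = v) ∧
    (∀ u v u' v' (h : H.Adj u v) (h' : H.Adj u' v'), s(u, v) ≠ s(u', v') →
      ∀ x, x ∈ (p u v h).support → x ∈ (p u' v' h').support →
        (x = f u ∨ x = f v) ∧ (x = f u' ∨ x = f v')) ∧
    HasPMOn G ((Set.range f ∪ {x | ∃ u v, ∃ h : H.Adj u v, x ∈ (p u v h).support})ᶜ)

/-- `K'` is obtained from `K` by a bicontraction: contracting both edges at a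
vertex `u` of degree two (with distinct neighbors `a` and `b`) and deleting
parallel edges. -/
def BicontractAt (K K' : (⊤ : SimpleGraph V).Subgraph) : Prop :=
  ∃ u a b : V, a ≠ b ∧ K.Adj u a ∧ K.Adj u b ∧
    (∀ x, K.Adj u x → x = a ∨ x = b) ∧
    K'.verts = K.verts \ {u, a} ∧
    ∀ x y, K'.Adj x y ↔ (x ∈ K.verts \ {u, a} ∧ y ∈ K.verts \ {u, a} ∧ x ≠ y ∧
      ∃ x' y', K.Adj x' y' ∧ (x' = x ∨ (x = b ∧ (x' = a ∨ x' = u))) ∧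
        (y' = y ∨ (y = b ∧ (y' = a ∨ y' = u))))

/-- `G` weakly contains `H`: `G` has a central subgraph `K` from which a graph
isomorphic to `H` can be obtained by a sequence of bicontractions. -/
def WeaklyContains (G : SimpleGraph V) (H : SimpleGraph W) : Prop :=
  ∃ K : (⊤ : SimpleGraph V).Subgraph,
    (∀ ⦃x y⦄, K.Adj x y → G.Adj x y) ∧
    HasPMOn G (K.vertsᶜ) ∧
    ∃ K' : (⊤ : SimpleGraph V).Subgraph,
      Relation.ReflTransGen BicontractAt K K' ∧ Nonempty (K'.coe ≃g H)

/-- The Heawood graph (LCF notation `[5, -5]⁷`): a 14-cycle together with the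
chords `{i, i+5}` for even `i`. -/
def heawood : SimpleGraph (Fin 14) :=
  SimpleGraph.fromRel (fun i j => j = i + 1 ∨ (Even (i : ℕ) ∧ j = i + 5))

/-- The digraph `D(G, M)` on the color class `A`, obtained from `G` by
directing every edge from `A` to `B` and contracting every edge of `M`. -/
def DGM (G : SimpleGraph V) (A : Set V) (M : G.Subgraph) : A → A → Prop :=
  fun a a' => ∃ b, M.Adj (↑a' : V) b ∧ G.Adj (↑a : V) b

/-- A digraph is strongly `k`-connected if deleting fewer than `k` vertices
leaves it strongly connected. -/
def StronglyKConnected {α : Type*} (D : α → α → Prop) (k : ℕ) : Prop :=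
  ∀ S : Set α, S.ncard < k → ∀ u v : α, u ∉ S → v ∉ S →
    Relation.ReflTransGen (fun x y => D x y ∧ x ∉ S ∧ y ∉ S) u v

/-- The edge `u₁u₂` of the graph with vertex set `S` obtained from `G₁` is
reducing: deleting both ends destroys 1-extendability. -/
def ReducingIn (G₁ : SimpleGraph V) (S : Set V) (u₁ u₂ : V) : Prop :=
  G₁.Adj u₁ u₂ ∧
    ¬ OneExtendableOn (restrictG G₁ (({u₁, u₂} : Set V)ᶜ)) (S \ {u₁, u₂})

/-- `G` (bipartite with bipartition `(A, B)`) is a 2-sum of `G₁` (with vertex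
set `V₁`) and `G₂` (with vertex set `V₂`) along the edge `u₁u₂`. -/
def IsTwoSum (G : SimpleGraph V) (A B : Set V) (u₁ u₂ : V)
    (G₁ G₂ : SimpleGraph V) (V₁ V₂ : Set V) : Prop :=
  u₁ ∈ A ∧ u₂ ∈ B ∧ G.Adj u₁ u₂ ∧
  ∃ X : Set V, X.Nonempty ∧ X ⊆ A \ {u₁} ∧ X ≠ A \ {u₁} ∧
    (nbdSet G X \ {u₂}).ncard = X.ncard ∧
    V₂ = ((X ∪ (nbdSet G X \ {u₂}))ᶜ : Set V) ∧
    V₁ = X ∪ (nbdSet G X \ {u₂}) ∪ {u₁, u₂} ∧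
    (∀ x y, G₁.Adj x y ↔ ((G.Adj x y ∧ x ∈ V₁ ∧ y ∈ V₁) ∨
      (x = u₁ ∧ y ∈ {w | w ∈ nbdSet G X \ {u₂} ∧ ¬ G.Adj u₁ w ∧ ∃ z, z ∉ V₁ ∧ G.Adj w z}) ∨
      (y = u₁ ∧ x ∈ {w | w ∈ nbdSet G X \ {u₂} ∧ ¬ G.Adj u₁ w ∧ ∃ z, z ∉ V₁ ∧ G.Adj w z}))) ∧
    (∀ x y, G₂.Adj x y ↔ ((G.Adj x y ∧ x ∈ V₂ ∧ y ∈ V₂) ∨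
      (x = u₂ ∧ y ∈ {w | w ∈ (A \ X) \ {u₁} ∧ ¬ G.Adj u₂ w ∧ ∃ z, z ∉ V₂ ∧ G.Adj w z}) ∨
      (y = u₂ ∧ x ∈ {w | w ∈ (A \ X) \ {u₁} ∧ ¬ G.Adj u₂ w ∧ ∃ z, z ∉ V₂ ∧ G.Adj w z})))

/-- A trisector: a set of four vertices whose deletion leaves at least three
connected components. -/
def IsTrisector (G : SimpleGraph V) (X : Set V) : Prop :=
  X.ncard = 4 ∧ 3 ≤ Nat.card (G.induce (Xᶜ : Set V)).ConnectedComponent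

/-!
A perfect matching pairs `A` with `B`. Suppose `X ⊆ A` is nonempty, `N(X) ≠ B` and
`|N(X)| < |X| + k`. If `t = |N(X)| - |X| + 1 ≤ k` vertices of `N(X)` can be matched into `A \ X`,
extending that matching leaves only `|X| - 1` partners in `N(X)` for `X`. Otherwise the deficiency
form of Hall's theorem yields `S ⊆ N(X)` whose neighbours all lie in a set `D ⊇ X` with
`|D| ≤ |S|`. Since `N(X) ≠ B`, the set `D ∪ S` misses a vertex, so by connectivity some edge joins
`D` to a vertex outside `S`; a perfect matching through that edge would match `S` injectively into
`D` minus a vertex.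

Conversely, deleting the vertices of a matching with at most `k` edges removes at most `k` vertices
of each `N(X)`, so the condition turns into Hall's condition for the remaining vertices of `A`, which
are as many as the remaining vertices of `B`.
-/

theorem Set.exists_injective_sum_of_ncard_le_add {α : Type*} [Finite α] (r : α → α → Prop)
    {Y T : Set α} {d : ℕ} (h : ∀ S ⊆ Y, S.ncard ≤ {b ∈ T | ∃ a ∈ S, r a b}.ncard + d) :
    ∃ g : Y → α ⊕ Fin d, Function.Injective g ∧
      ∀ a : Y, Sum.elim (fun b => b ∈ T ∧ r a b) (fun _ => True) (g a) := by
  classical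
  have := Fintype.ofFinite α
  -- Hall's theorem for `Y` against `T` enlarged by `d` new vertices adjacent to all of `Y`.
  refine (Fintype.all_card_le_filter_rel_iff_exists_injective _).mp fun s => ?_
  rcases s.eq_empty_or_nonempty with rfl | ⟨a₀, ha₀⟩
  · simp
  have hfilter : (Finset.univ.filter fun c : α ⊕ Fin d =>
        ∃ a ∈ s, Sum.elim (fun b => b ∈ T ∧ r a b) (fun _ => True) c) =
      (Finset.univ.filter fun b : α => b ∈ T ∧ ∃ a ∈ s, r a b).disjSum Finset.univ := by
    ext (b | i)
    · simp only [Finset.mem_filter, Finset.mem_univ, true_and, Finset.inl_mem_disjSum,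
        Sum.elim_inl]
      aesop
    · simp only [Finset.mem_filter, Finset.mem_univ, true_and, Finset.inr_mem_disjSum,
        Sum.elim_inr, and_true, iff_true]
      exact ⟨a₀, ha₀⟩
  have hS := h (Subtype.val '' (s : Set Y)) (Subtype.coe_image_subset _ _)
  rw [Set.ncard_image_of_injective _ Subtype.val_injective, Set.ncard_coe_finset] at hS
  rw [hfilter, Finset.card_disjSum, Finset.card_univ, Fintype.card_fin]
  convert hS using 2
  rw [← Set.ncard_coe_finset]
  congr 1
  ext b
  simp

theorem Set.exists_injOn_of_ncard_le_add {α : Type*} [Finite α] (r : α → α → Prop) {Y T : Set α}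
    {d : ℕ} (h : ∀ S ⊆ Y, S.ncard ≤ {b ∈ T | ∃ a ∈ S, r a b}.ncard + d) :
    ∃ Z ⊆ Y, Y.ncard ≤ Z.ncard + d ∧
      ∃ f : α → α, Set.InjOn f Z ∧ ∀ z ∈ Z, f z ∈ T ∧ r z (f z) := by
  classical
  obtain ⟨g, hg, hgr⟩ := Set.exists_injective_sum_of_ncard_le_add r h
  let L : Set Y := {a | (g a).isLeft}
  let f : α → α := fun v => if hv : v ∈ Y then Sum.elim id (fun _ => v) (g ⟨v, hv⟩) else v
  have hfg : ∀ a ∈ L, g a = Sum.inl (f a) := by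
    intro a ha
    simp only [f, dif_pos a.2, Subtype.coe_eta]
    cases hga : g a with
    | inl b => rfl
    | inr i => simp [L, hga] at ha
  refine ⟨Subtype.val '' L, Subtype.coe_image_subset _ _, ?_, f, ?_, ?_⟩
  · have hLc : Lᶜ.ncard ≤ d := by
      calc Lᶜ.ncard ≤ (Set.range (Sum.inr : Fin d → α ⊕ Fin d)).ncard := by
            refine Set.ncard_le_ncard_of_injOn g (fun a ha => ?_) hg.injOn
            cases hga : g a with
            | inl b => simp [L, hga] at ha
            | inr i => exact ⟨i, rfl⟩
        _ = d := by rw [Set.ncard_range_of_injective Sum.inr_injective, Nat.card_fin]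
    rw [Set.ncard_image_of_injective _ Subtype.val_injective, ← Nat.card_coe_set_eq,
      ← Set.ncard_add_ncard_compl L]
    omega
  · rintro _ ⟨a, ha, rfl⟩ _ ⟨b, hb, rfl⟩ hab
    exact congrArg Subtype.val (hg (by rw [hfg a ha, hfg b hb, hab]))
  · rintro _ ⟨a, ha, rfl⟩
    simpa [hfg a ha] using hgr a

namespace SimpleGraph

variable {G : SimpleGraph V}

theorem Connected.eq_univ_of_adj_mem (hG : G.Connected) {S : Set V} (hS : S.Nonempty)
    (hadj : ∀ ⦃a b⦄, a ∈ S → G.Adj a b → b ∈ S) : S = Set.univ := by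
  obtain ⟨u, hu⟩ := hS
  refine Set.eq_univ_of_forall fun w => ?_
  obtain ⟨p⟩ := hG.preconnected u w
  induction p with
  | nil => exact hu
  | cons h _ ih => exact ih (hadj hu h)

theorem Subgraph.IsMatching.ncard_verts_inter_eq_ncard_edgeSet {M : G.Subgraph} {A B : Set V}
    (hM : M.IsMatching) (hG : G.IsBipartiteWith A B) :
    (M.verts ∩ A).ncard = M.edgeSet.ncard := by
  choose p hp using fun v (hv : v ∈ M.verts) => hM hv
  have hpB : ∀ v (hv : v ∈ M.verts ∩ A), p v hv.1 ∈ B := fun v hv =>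
    hG.mem_of_mem_adj hv.2 (M.adj_sub (hp v hv.1).1)
  refine Set.ncard_congr (fun v hv => s(v, p v hv.1)) (fun v hv => (hp v hv.1).1) ?_ ?_
  · intro v w hv hw h
    rcases Sym2.eq_iff.mp h with ⟨hvw, -⟩ | ⟨hvw, -⟩
    · exact hvw
    · exact absurd (hvw ▸ hpB w hw) (hG.disjoint.notMem_of_mem_left hv.2)
  · intro e he
    induction e using Sym2.ind with
    | _ x y =>
      have hxy : M.Adj x y := he
      rcases hG.mem_of_adj (M.adj_sub hxy) with ⟨hx, -⟩ | ⟨-, hy⟩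
      · exact ⟨x, ⟨M.edge_vert hxy, hx⟩, by rw [← (hp x _).2 y hxy]⟩
      · exact ⟨y, ⟨M.edge_vert hxy.symm, hy⟩, by rw [← (hp y _).2 x hxy.symm, Sym2.eq_swap]⟩

theorem Subgraph.IsPerfectMatching.ncard_add_ncard_le [Finite V] {P : G.Subgraph}
    (hP : P.IsPerfectMatching) {X Y Z : Set V} (hXY : ∀ x ∈ X, ∀ y, G.Adj x y → y ∈ Y)
    (hZY : Z ⊆ Y) (hZ : ∀ z ∈ Z, ∃ w ∉ X, P.Adj z w) : X.ncard + Z.ncard ≤ Y.ncard := by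
  choose p hp using fun v => hP.1 (hP.2 v)
  have hmaps : ∀ x ∈ X, p x ∈ Y \ Z := fun x hx =>
    ⟨hXY x hx _ (P.adj_sub (hp x).1), fun hz => by
      obtain ⟨w, hwX, hw⟩ := hZ _ hz
      exact hwX (by rwa [hP.1.eq_of_adj_left hw (hp x).1.symm])⟩
  have hinj : Set.InjOn p X := fun x _ y _ h =>
    hP.1.eq_of_adj_right (hp x).1 (by rw [h]; exact (hp y).1)
  calc X.ncard + Z.ncard ≤ (Y \ Z).ncard + Z.ncard :=
        Nat.add_le_add_right (Set.ncard_le_ncard_of_injOn p hmaps hinj) _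
    _ = Y.ncard := Set.ncard_sdiff_add_ncard_of_subset hZY

theorem exists_isMatching_of_injOn {Z : Set V} {f : V → V} (hf : Set.InjOn f Z)
    (hadj : ∀ z ∈ Z, G.Adj z (f z)) (hdisj : Disjoint Z (f '' Z)) :
    ∃ M : G.Subgraph, M.IsMatching ∧ M.verts = Z ∪ f '' Z ∧
      M.edgeSet = (fun z => s(z, f z)) '' Z := by
  refine ⟨{ verts := Z ∪ f '' Z
            Adj := fun v w => (v ∈ Z ∧ w = f v) ∨ (w ∈ Z ∧ v = f w)
            adj_sub := by
              rintro v w (⟨hv, rfl⟩ | ⟨hw, rfl⟩)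
              exacts [hadj v hv, (hadj w hw).symm]
            edge_vert := by
              rintro v w (⟨hv, rfl⟩ | ⟨hw, rfl⟩)
              exacts [Or.inl hv, Or.inr ⟨w, hw, rfl⟩]
            symm := ⟨fun v w h => h.symm⟩ }, ?_, rfl, ?_⟩
  · rintro v (hv | ⟨z, hz, rfl⟩)
    · refine ⟨f v, Or.inl ⟨hv, rfl⟩, ?_⟩
      rintro w (⟨-, rfl⟩ | ⟨hw, rfl⟩)
      · rfl
      · exact absurd hv (hdisj.notMem_of_mem_right ⟨w, hw, rfl⟩)
    · refine ⟨z, Or.inr ⟨hz, rfl⟩, ?_⟩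
      rintro w (⟨hfz, rfl⟩ | ⟨hw, hfw⟩)
      · exact absurd hfz (hdisj.notMem_of_mem_right ⟨z, hz, rfl⟩)
      · exact hf hw hz hfw.symm
  · ext e
    induction e using Sym2.ind with
    | _ v w =>
      simp only [Subgraph.mem_edgeSet, Set.mem_image]
      constructor
      · rintro (⟨hv, rfl⟩ | ⟨hw, rfl⟩)
        exacts [⟨v, hv, rfl⟩, ⟨w, hw, Sym2.eq_swap⟩]
      · rintro ⟨z, hz, hze⟩
        rcases Sym2.eq_iff.mp hze with ⟨rfl, rfl⟩ | ⟨rfl, rfl⟩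
        exacts [Or.inl ⟨hz, rfl⟩, Or.inr ⟨hz, rfl⟩]

theorem exists_isMatching_verts_eq_union [Finite V] {s t : Set V} (hst : Disjoint s t)
    (hcard : t.ncard ≤ s.ncard) (h : ∀ S ⊆ s, S.ncard ≤ {b ∈ t | ∃ a ∈ S, G.Adj a b}.ncard) :
    ∃ M : G.Subgraph, M.IsMatching ∧ M.verts = s ∪ t := by
  obtain ⟨Z, hZs, hsZ, f, hf, hft⟩ := Set.exists_injOn_of_ncard_le_add G.Adj (d := 0) h
  obtain rfl : Z = s := Set.eq_of_subset_of_ncard_le hZs hsZ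
  have himg : f '' Z = t := Set.eq_of_subset_of_ncard_le
    (Set.image_subset_iff.2 fun z hz => (hft z hz).1) (by rwa [hf.ncard_image])
  obtain ⟨M, hM, hMv, -⟩ := exists_isMatching_of_injOn hf (fun z hz => (hft z hz).2) (himg ▸ hst)
  exact ⟨M, hM, himg ▸ hMv⟩

theorem _root_.IsBipartition.isBipartiteWith {A B : Set V} (h : IsBipartition G A B) :
    G.IsBipartiteWith A B :=
  ⟨h.1, h.2.2⟩

theorem Subgraph.IsMatching.ncard_sdiff_verts_eq [Finite V] {M : G.Subgraph} {A B : Set V}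
    (hM : M.IsMatching) (hG : G.IsBipartiteWith A B) (hcard : A.ncard = B.ncard) :
    (A \ M.verts).ncard = (B \ M.verts).ncard := by
  have hMA := hM.ncard_verts_inter_eq_ncard_edgeSet hG
  have hMB := hM.ncard_verts_inter_eq_ncard_edgeSet hG.symm
  have hA := Set.ncard_inter_add_ncard_sdiff_eq_ncard A M.verts
  have hB := Set.ncard_inter_add_ncard_sdiff_eq_ncard B M.verts
  rw [Set.inter_comm] at hA hB
  omega

theorem Subgraph.IsMatching.ncard_le_ncard_of_forall_ncard_add_le [Finite V] {M : G.Subgraph}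
    {A B : Set V} {k : ℕ} (hM : M.IsMatching) (hG : G.IsBipartiteWith A B)
    (hcard : A.ncard = B.ncard) (hMk : M.edgeSet.ncard ≤ k)
    (hHall : ∀ X ⊆ A, X.Nonempty → X.ncard + k ≤ (nbdSet G X).ncard ∨ nbdSet G X = B)
    {S : Set V} (hS : S ⊆ A \ M.verts) :
    S.ncard ≤ {b ∈ B \ M.verts | ∃ a ∈ S, G.Adj a b}.ncard := by
  rcases S.eq_empty_or_nonempty with rfl | hSne
  · simp
  rcases hHall S (hS.trans Set.sdiff_subset) hSne with hbig | hSB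
  · have hNS : nbdSet G S ⊆ {b ∈ B \ M.verts | ∃ a ∈ S, G.Adj a b} ∪ (M.verts ∩ B) := by
      rintro b ⟨-, a, ha, hab⟩
      have hb : b ∈ B := hG.mem_of_mem_adj (hS ha).1 hab
      by_cases hbM : b ∈ M.verts
      · exact Or.inr ⟨hbM, hb⟩
      · exact Or.inl ⟨⟨hb, hbM⟩, a, ha, hab⟩
    have := (Set.ncard_le_ncard hNS).trans (Set.ncard_union_le _ _)
    have := hM.ncard_verts_inter_eq_ncard_edgeSet hG.symm
    omega
  · have hB'S : B \ M.verts ⊆ {b ∈ B \ M.verts | ∃ a ∈ S, G.Adj a b} := fun b hb =>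
      ⟨hb, (hSB ▸ hb.1 : b ∈ nbdSet G S).2⟩
    have := Set.ncard_le_ncard hB'S
    have := Set.ncard_le_ncard hS
    have := hM.ncard_sdiff_verts_eq hG hcard
    omega

theorem kExtendable_of_forall_ncard_add_le [Finite V] {A B : Set V} {k : ℕ}
    (hbip : IsBipartition G A B) (hcard : A.ncard = B.ncard)
    (hHall : ∀ X ⊆ A, X.Nonempty → X.ncard + k ≤ (nbdSet G X).ncard ∨ nbdSet G X = B) :
    KExtendable G k := by
  intro M hM hMk
  have hG := hbip.isBipartiteWith
  obtain ⟨M', hM', hM'v⟩ := exists_isMatching_verts_eq_union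
    (hG.disjoint.mono Set.sdiff_subset Set.sdiff_subset) (hM.ncard_sdiff_verts_eq hG hcard).ge
    fun S hS => hM.ncard_le_ncard_of_forall_ncard_add_le hG hcard hMk hHall hS
  refine ⟨M ⊔ M', le_sup_left, hM.sup hM' ?_, fun v => ?_⟩
  · rw [hM.support_eq_verts, hM'.support_eq_verts, hM'v]
    exact Set.disjoint_union_right.2 ⟨Set.disjoint_sdiff_right, Set.disjoint_sdiff_right⟩
  · by_cases hv : v ∈ M.verts
    · exact Or.inl hv
    · rw [Subgraph.verts_sup, hM'v]
      rcases (hbip.2.1 ▸ Set.mem_univ v : v ∈ A ∪ B) with hvA | hvB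
      exacts [Or.inr (Or.inl ⟨hvA, hv⟩), Or.inr (Or.inr ⟨hvB, hv⟩)]

theorem Subgraph.IsPerfectMatching.ncard_eq_ncard {P : G.Subgraph} {A B : Set V}
    (hP : P.IsPerfectMatching) (hG : G.IsBipartiteWith A B) : A.ncard = B.ncard := by
  have hA := hP.1.ncard_verts_inter_eq_ncard_edgeSet hG
  have hB := hP.1.ncard_verts_inter_eq_ncard_edgeSet hG.symm
  rw [hP.2.verts_eq_univ, Set.univ_inter] at hA hB
  rw [hA, hB]

theorem KExtendable.mono {k j : ℕ} (h : KExtendable G k) (hjk : j ≤ k) : KExtendable G j :=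
  fun M hM hMj => h M hM (hMj.trans hjk)

theorem KExtendable.exists_isPerfectMatching {k : ℕ} (h : KExtendable G k) :
    ∃ P : G.Subgraph, P.IsPerfectMatching := by
  obtain ⟨P, -, hP⟩ := h ⊥ (fun v hv => hv.elim) (by simp)
  exact ⟨P, hP⟩

theorem KExtendable.ncard_add_ncard_le [Finite V] {k : ℕ} (hG : KExtendable G k)
    {X Y Z : Set V} {f : V → V} (hXY : ∀ x ∈ X, ∀ y, G.Adj x y → y ∈ Y) (hZY : Z ⊆ Y)
    (hf : Set.InjOn f Z) (hadj : ∀ z ∈ Z, G.Adj z (f z)) (hfX : ∀ z ∈ Z, f z ∉ X)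
    (hdisj : Disjoint Z (f '' Z)) (hZk : Z.ncard ≤ k) : X.ncard + Z.ncard ≤ Y.ncard := by
  obtain ⟨M, hM, -, hMe⟩ := exists_isMatching_of_injOn hf hadj hdisj
  obtain ⟨P, hMP, hP⟩ := hG M hM <| by
    rw [hMe]
    exact (Set.ncard_image_le (Set.toFinite Z)).trans hZk
  refine hP.ncard_add_ncard_le hXY hZY fun z hz => ⟨f z, hfX z hz, hMP.2 ?_⟩
  rw [← Subgraph.mem_edgeSet, hMe]
  exact ⟨z, hz, rfl⟩

theorem KExtendable.union_eq_univ_of_ncard_le [Finite V] (hG : KExtendable G 1)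
    (hconn : G.Connected) {S D : Set V} (hD : D.Nonempty)
    (hSD : ∀ s ∈ S, ∀ a, G.Adj s a → a ∈ D) (hcard : D.ncard ≤ S.ncard) :
    D ∪ S = Set.univ := by
  -- A perfect matching through an edge from `D` to outside `S` would match `S` into `D` minus
  -- a vertex.
  refine hconn.eq_univ_of_adj_mem (hD.mono Set.subset_union_left) ?_
  rintro a w (ha | ha) haw
  · by_contra hw
    obtain ⟨P, hMP, hP⟩ := hG _ (Subgraph.IsMatching.subgraphOfAdj haw) (by simp)
    have := hP.ncard_add_ncard_le hSD (Set.singleton_subset_iff.2 ha) (Z := {a}) <| by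
      rintro _ rfl
      exact ⟨w, fun hwS => hw (Or.inr hwS), hMP.2 (by simp)⟩
    rw [Set.ncard_singleton] at this
    omega
  · exact Or.inl (hSD a ha w haw)

theorem IsBipartiteWith.nbdSet_subset {A B X : Set V} (hG : G.IsBipartiteWith A B)
    (hXA : X ⊆ A) : nbdSet G X ⊆ B := by
  rintro y ⟨-, x, hx, hxy⟩
  exact hG.mem_of_mem_adj (hXA hx) hxy

theorem IsBipartiteWith.mem_nbdSet {A B X : Set V} (hG : G.IsBipartiteWith A B) (hXA : X ⊆ A)
    {x y : V} (hx : x ∈ X) (hxy : G.Adj x y) : y ∈ nbdSet G X :=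
  ⟨fun hy => hG.disjoint.notMem_of_mem_left (hXA hy) (hG.mem_of_mem_adj (hXA hx) hxy), x, hx, hxy⟩

theorem KExtendable.ncard_lt_ncard_add_ncard_of_subset_nbdSet [Finite V] {A B : Set V}
    (hG : KExtendable G 1) (hconn : G.Connected) (hbip : G.IsBipartiteWith A B) {X S : Set V}
    (hXA : X ⊆ A) (hX : X.Nonempty) (hXB : nbdSet G X ≠ B) (hSX : S ⊆ nbdSet G X) :
    S.ncard < {a ∈ A \ X | ∃ y ∈ S, G.Adj y a}.ncard + X.ncard := by
  by_contra! hle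
  set D := X ∪ {a ∈ A \ X | ∃ y ∈ S, G.Adj y a}
  have hSB := hSX.trans (hbip.nbdSet_subset hXA)
  have hSD : ∀ s ∈ S, ∀ a, G.Adj s a → a ∈ D := by
    intro s hs a hsa
    by_cases haX : a ∈ X
    · exact Or.inl haX
    · exact Or.inr ⟨⟨hbip.symm.mem_of_mem_adj (hSB hs) hsa, haX⟩, s, hs, hsa⟩
  have hDS : D.ncard ≤ S.ncard := (Set.ncard_union_le _ _).trans (by omega)
  have hunion := hG.union_eq_univ_of_ncard_le hconn (hX.mono Set.subset_union_left) hSD hDS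
  refine hXB ((hbip.nbdSet_subset hXA).antisymm fun b hb => ?_)
  rcases hunion.symm ▸ Set.mem_univ b with (hbX | ⟨⟨hbA, -⟩, -⟩) | hbS
  · exact absurd hb (hbip.disjoint.notMem_of_mem_left (hXA hbX))
  · exact absurd hb (hbip.disjoint.notMem_of_mem_left hbA)
  · exact hSX hbS

theorem KExtendable.ncard_add_le_ncard_nbdSet [Finite V] {A B : Set V} {k : ℕ}
    (hG : KExtendable G k) (hconn : G.Connected) (hbip : G.IsBipartiteWith A B) {X : Set V}
    (hXA : X ⊆ A) (hX : X.Nonempty) (hXB : nbdSet G X ≠ B) :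
    X.ncard + k ≤ (nbdSet G X).ncard := by
  set Y := nbdSet G X
  have hXY : ∀ x ∈ X, ∀ y, G.Adj x y → y ∈ Y := fun x hx y => hbip.mem_nbdSet hXA hx
  obtain ⟨P₀, hP₀⟩ := hG.exists_isPerfectMatching
  have hXY_le := hP₀.ncard_add_ncard_le hXY (Set.empty_subset Y) (by simp)
  have hX₀ : 0 < X.ncard := (Set.ncard_pos (Set.toFinite X)).2 hX
  by_contra! hlt
  have hdef : ∀ S ⊆ Y, S.ncard ≤ {a ∈ A \ X | ∃ y ∈ S, G.Adj y a}.ncard + (X.ncard - 1) :=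
    fun S hS => by
      have := (hG.mono (by omega)).ncard_lt_ncard_add_ncard_of_subset_nbdSet hconn hbip hXA hX
        hXB hS
      omega
  obtain ⟨Z, hZY, hYZ, f, hf, hfT⟩ := Set.exists_injOn_of_ncard_le_add G.Adj hdef
  obtain ⟨Z', hZ'Z, hZ'⟩ :=
    Set.exists_subset_card_eq (show Y.ncard - (X.ncard - 1) ≤ Z.ncard by omega)
  have hdisj : Disjoint Z' (f '' Z') := by
    refine hbip.disjoint.symm.mono (hZ'Z.trans (hZY.trans (hbip.nbdSet_subset hXA))) ?_
    rintro _ ⟨z, hz, rfl⟩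
    exact (hfT z (hZ'Z hz)).1.1
  have := hG.ncard_add_ncard_le hXY (hZ'Z.trans hZY) (hf.mono hZ'Z)
    (fun z hz => (hfT z (hZ'Z hz)).2) (fun z hz => (hfT z (hZ'Z hz)).1.2) hdisj (by omega)
  omega

end SimpleGraph

/-- Hall-type characterization of `k`-extendability for connected bipartite
graphs. -/
theorem kExtendable_iff [Fintype V] (G : SimpleGraph V) (A B : Set V) (k : ℕ)
    (hconn : G.Connected) (hbip : IsBipartition G A B) :
    KExtendable G k ↔
      (A.ncard = B.ncard ∧ ∀ X : Set V, X ⊆ A → X.Nonempty →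
        (X.ncard + k ≤ (nbdSet G X).ncard ∨ nbdSet G X = B)) := by
  refine ⟨fun hG => ⟨?_, fun X hXA hX => ?_⟩, fun ⟨hcard, hHall⟩ =>
    kExtendable_of_forall_ncard_add_le hbip hcard hHall⟩
  · obtain ⟨P, hP⟩ := hG.exists_isPerfectMatching
    exact hP.ncard_eq_ncard hbip.isBipartiteWith
  · by_cases hXB : nbdSet G X = B
    · exact Or.inr hXB
    · exact Or.inl (hG.ncard_add_le_ncard_nbdSet hconn hbip.isBipartiteWith hXA hX hXB)
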